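/- Under the hypotheses of the previous statement, if additionally μ satisfies the non-Dini condition ∫₀^{a} μ(τ)/τ dτ = +∞, then Ỹ cannot be defined on all of [1,∞); i.e., there is no C¹ function Ỹ : [1,∞) → [a,∞) satisfying Ỹ'(R)/Ỹ(R)^p ≥ c R^{−1} μ(a R^{−θ}) for all R ≥ 1. -/

import Mathlib

open MeasureTheory Set Filter Topology

/-!
Since `Ỹ' / Ỹ ^ p` is the derivative of `-Ỹ ^ (1 - p) / (p - 1)` and `Ỹ ≥ a`, the differential
inequality integrates to `∫₁^R c t⁻¹ μ(a t^{-θ}) dt ≤ a^{1-p} / (p - 1)` for every `R ≥ 1`.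
The substitution `τ = a t^{-θ}` turns the left side into `(c / θ) ∫_{a R^{-θ}}^a μ(τ) / τ dτ`,
so these integrals of the nonnegative function `μ(τ) / τ` stay bounded as `R → ∞`, which makes it
integrable on `(0, a]`.
-/
theorem hasDerivAt_neg_rpow_one_sub_div {Y : ℝ → ℝ} {y t p : ℝ} (hY : HasDerivAt Y y t)
    (hYt : 0 < Y t) (hp : p ≠ 1) :
    HasDerivAt (fun s => -Y s ^ (1 - p) / (p - 1)) (y / Y t ^ p) t := by
  have hp' : p - 1 ≠ 0 := sub_ne_zero.mpr hp
  refine (((hY.rpow_const (p := 1 - p) (Or.inl hYt.ne')).neg).div_const (p - 1)).congr_deriv ?_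
  rw [show 1 - p - 1 = -p by ring, Real.rpow_neg hYt.le]
  field_simp
  ring

theorem integral_le_of_le_deriv_div_rpow {Y Y' φ : ℝ → ℝ} {p a s R : ℝ} (hp : 1 < p)
    (ha : 0 < a) (hsR : s ≤ R) (hY : ∀ t ∈ Icc s R, HasDerivAt Y (Y' t) t)
    (hYa : ∀ t ∈ Icc s R, a ≤ Y t) (hφ : IntegrableOn φ (Icc s R))
    (hφY : ∀ t ∈ Ioo s R, φ t ≤ Y' t / Y t ^ p) :
    ∫ t in s..R, φ t ≤ a ^ (1 - p) / (p - 1) := by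
  have hYpos : ∀ t ∈ Icc s R, 0 < Y t := fun t ht => ha.trans_le (hYa t ht)
  have hderiv : ∀ t ∈ Icc s R,
      HasDerivAt (fun s => -Y s ^ (1 - p) / (p - 1)) (Y' t / Y t ^ p) t := fun t ht =>
    hasDerivAt_neg_rpow_one_sub_div (hY t ht) (hYpos t ht) hp.ne'
  calc ∫ t in s..R, φ t
      ≤ -Y R ^ (1 - p) / (p - 1) - -Y s ^ (1 - p) / (p - 1) :=
        intervalIntegral.integral_le_sub_of_hasDeriv_right_of_le hsR
          (fun t ht => (hderiv t ht).continuousAt.continuousWithinAt)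
          (fun t ht => (hderiv t (Ioo_subset_Icc_self ht)).hasDerivWithinAt) hφ hφY
    _ ≤ a ^ (1 - p) / (p - 1) := by
        have hs : s ∈ Icc s R := left_mem_Icc.mpr hsR
        have hR : R ∈ Icc s R := right_mem_Icc.mpr hsR
        have hYs : Y s ^ (1 - p) ≤ a ^ (1 - p) :=
          Real.rpow_le_rpow_of_nonpos ha (hYa s hs) (by linarith)
        have hYR : 0 ≤ Y R ^ (1 - p) := (Real.rpow_pos_of_pos (hYpos R hR) _).le
        rw [← sub_div]
        gcongr
        linarith

theorem integral_Icc_div_eq_mul_integral_Icc_comp_rpow_neg (g : ℝ → ℝ) {a θ s R : ℝ}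
    (ha : 0 < a) (hθ : 0 < θ) (hs : 0 < s) (hsR : s ≤ R) :
    ∫ τ in Icc (a * R ^ (-θ)) (a * s ^ (-θ)), g τ / τ
      = θ * ∫ t in Icc s R, g (a * t ^ (-θ)) / t := by
  have hderiv : ∀ t ∈ Icc s R,
      HasDerivAt (fun t => a * t ^ (-θ)) (a * (-θ * t ^ (-θ - 1))) t := fun t ht =>
    (Real.hasDerivAt_rpow_const (Or.inl (hs.trans_le ht.1).ne')).const_mul a
  have hcov := integral_Icc_deriv_smul_of_deriv_nonpos (g := fun τ => g τ / τ)
    (fun t ht => (hderiv t ht).continuousAt.continuousWithinAt)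
    (fun t ht => hderiv t (Ioo_subset_Icc_self ht))
    (fun t ht => by
      have := Real.rpow_pos_of_pos (hs.trans ht.1) (-θ - 1)
      nlinarith [mul_pos ha hθ])
    hsR
  have hpt : ∀ t ∈ Icc s R, (a * (-θ * t ^ (-θ - 1))) • (g (a * t ^ (-θ)) / (a * t ^ (-θ)))
      = -(θ * (g (a * t ^ (-θ)) / t)) := by
    intro t ht
    have ht0 : 0 < t := hs.trans_le ht.1
    have := Real.rpow_pos_of_pos ht0 (-θ)
    rw [smul_eq_mul, Real.rpow_sub_one ht0.ne']
    field_simp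
  rw [setIntegral_congr_fun measurableSet_Icc hpt, integral_neg, neg_inj] at hcov
  rw [← hcov, integral_const_mul]

theorem integrableOn_Ioc_of_setIntegral_le_of_nonneg {ι : Type*} {l : Filter ι} [l.NeBot]
    [l.IsCountablyGenerated] {f : ℝ → ℝ} {ε : ι → ℝ} {a₀ b C : ℝ}
    (hf : ∀ x ∈ Ioc a₀ b, 0 ≤ f x) (hεa : ∀ i, a₀ ≤ ε i)
    (hfi : ∀ i, IntegrableOn f (Ioc (ε i) b)) (hε : Tendsto ε l (𝓝 a₀))
    (hC : ∀ᶠ i in l, ∫ x in Ioc (ε i) b, f x ≤ C) : IntegrableOn f (Ioc a₀ b) := by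
  refine integrableOn_Ioc_of_intervalIntegral_norm_bounded_left (I := C) hfi hε
    (hC.mono fun i hi => ?_)
  rwa [setIntegral_congr_fun measurableSet_Ioc fun x hx =>
    Real.norm_of_nonneg (hf x ⟨(hεa i).trans_lt hx.1, hx.2⟩)]

theorem Monotone.integrableOn_div_Ioc {μ : ℝ → ℝ} (hμ : Monotone μ) {ε b : ℝ} (hε : 0 < ε) :
    IntegrableOn (fun τ => μ τ / τ) (Ioc ε b) := by
  have hinv : ContinuousOn (fun τ : ℝ => τ⁻¹) (Icc ε b) :=
    continuousOn_inv₀.mono fun τ hτ => (hε.trans_le hτ.1).ne'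
  simpa only [div_eq_mul_inv] using
    (((hμ.monotoneOn _).integrableOn_isCompact isCompact_Icc).mul_continuousOn hinv
      isCompact_Icc).mono_set Ioc_subset_Icc_self

theorem Monotone.integrableOn_comp_mul_rpow_neg_div {μ : ℝ → ℝ} (hμ : Monotone μ) {a θ s R : ℝ}
    (ha : 0 ≤ a) (hθ : 0 ≤ θ) (hs : 0 < s) :
    IntegrableOn (fun t => μ (a * t ^ (-θ)) / t) (Icc s R) := by
  have hanti : AntitoneOn (fun t => μ (a * t ^ (-θ))) (Icc s R) := fun x hx y _ hxy =>
    hμ (mul_le_mul_of_nonneg_left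
      (Real.rpow_le_rpow_of_nonpos (hs.trans_le hx.1) hxy (neg_nonpos.mpr hθ)) ha)
  have hinv : ContinuousOn (fun t : ℝ => t⁻¹) (Icc s R) :=
    continuousOn_inv₀.mono fun t ht => (hs.trans_le ht.1).ne'
  simpa only [div_eq_mul_inv] using
    (hanti.integrableOn_isCompact isCompact_Icc).mul_continuousOn hinv isCompact_Icc

/-- Under the hypotheses of the blow-up ODE lemma, if moreover `μ` satisfies the
non-Dini condition `∫₀^a μ(τ)/τ dτ = +∞`, then no `C¹` function `Ỹ : [1,∞) → [a,∞)`
can satisfy `Ỹ'(R)/Ỹ(R)^p ≥ c R⁻¹ μ(a R^{−θ})` for all `R ≥ 1`. -/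
theorem blowup_no_global_solution
    (p a c θ : ℝ) (hp : 1 < p) (ha : 0 < a) (hc : 0 < c) (hθ : 0 < θ)
    (μ : ℝ → ℝ) (hmono : Monotone μ) (hnonneg : ∀ τ, 0 ≤ μ τ)
    (hnonDini : ¬ IntegrableOn (fun τ => μ τ / τ) (Ioc 0 a)) :
    ¬ ∃ Y Y' : ℝ → ℝ,
        (∀ R : ℝ, 1 ≤ R → HasDerivAt Y (Y' R) R) ∧
        ContinuousOn Y' (Ici 1) ∧
        (∀ R : ℝ, 1 ≤ R → a ≤ Y R) ∧
        (∀ R : ℝ, 1 ≤ R → c * R⁻¹ * μ (a * R ^ (-θ)) ≤ Y' R / (Y R) ^ p) := by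
  rintro ⟨Y, Y', hY, -, hYa, hode⟩
  have hbound : ∀ R : ℝ, 1 ≤ R →
      ∫ τ in Ioc (a * R ^ (-θ)) a, μ τ / τ ≤ θ / c * (a ^ (1 - p) / (p - 1)) := by
    intro R hR
    have hftc := integral_le_of_le_deriv_div_rpow (φ := fun t => c * (μ (a * t ^ (-θ)) / t))
      hp ha hR (fun t ht => hY t ht.1) (fun t ht => hYa t ht.1)
      ((hmono.integrableOn_comp_mul_rpow_neg_div ha.le hθ.le one_pos).const_mul c)
      (fun t ht => by convert hode t ht.1.le using 1; ring)
    rw [intervalIntegral.integral_of_le hR, ← integral_Icc_eq_integral_Ioc,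
      integral_const_mul] at hftc
    have hcov := integral_Icc_div_eq_mul_integral_Icc_comp_rpow_neg μ ha hθ one_pos hR
    rw [Real.one_rpow, mul_one, integral_Icc_eq_integral_Ioc] at hcov
    rw [hcov, div_mul_eq_mul_div, le_div_iff₀ hc]
    linarith [mul_le_mul_of_nonneg_left hftc hθ.le]
  have hRn : ∀ n : ℕ, 1 ≤ (n : ℝ) + 1 := fun n => le_add_of_nonneg_left n.cast_nonneg
  refine hnonDini <| integrableOn_Ioc_of_setIntegral_le_of_nonneg (l := atTop)
    (ε := fun n : ℕ => a * ((n : ℝ) + 1) ^ (-θ)) (fun τ hτ => div_nonneg (hnonneg τ) hτ.1.le)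
    (fun n => by positivity) (fun n => hmono.integrableOn_div_Ioc (by positivity)) ?_
    (Eventually.of_forall fun n => hbound _ (hRn n))
  simpa using ((tendsto_rpow_neg_atTop hθ).comp
    (tendsto_atTop_add_const_right _ 1 tendsto_natCast_atTop_atTop)).const_mul a
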